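/- For every natural number n ≥ 1 there exists a natural number m (one may take m = 3 for n = 1 and m = n for n ≥ 2) such that every finite 3-uniform hypergraph A in K₀⁺ with exactly n vertices admits an extension C in K₀⁺ (a 3-uniform hypergraph on a vertex set containing that of A, inducing A on it) with |C \ A| = m such that (A, C) is a 0-minimal biminimal pair. -/

import Mathlib

/-- The predimension of the finite vertex set `S` with respect to the hyperedge set `E`:
`δ(S) = |S| - |{e ∈ E : e ⊆ S}|`. -/
def hdelta {α : Type*} [DecidableEq α] (E : Finset (Finset α)) (S : Finset α) : ℤ :=
  (S.card : ℤ) - ((E.filter (fun e => e ⊆ S)).card : ℤ)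

/-!
Attach to `A` a cycle of `m` new vertices `b₀, …, b_{m-1}` and the hyperedges
`{aᵢ, bᵢ, bᵢ₊₁}` (indices mod `m`), where `i ↦ aᵢ` runs over the vertices of `A` (for `n = 1`
the single vertex three times). Each new vertex and each new hyperedge change `δ` by `+1` and `-1`,
so `δ(C/A) = 0`. A set strictly between `A` and `C` meets the cycle in a proper nonempty subset,
which contains a vertex `bᵢ` with `bᵢ₊₁` missing, so it spans fewer new hyperedges than new
vertices: this is minimality. Sets avoiding `A` span no new hyperedge, which gives `C ∈ K₀⁺`.
-/

open Finset Function

section Predimension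

variable {α : Type*} [DecidableEq α]

lemma hdelta_union_of_disjoint {E F : Finset (Finset α)} (h : Disjoint E F) (S : Finset α) :
    hdelta (E ∪ F) S = hdelta E S - #(F.filter (· ⊆ S)) := by
  unfold hdelta
  rw [filter_union, card_union_of_disjoint (disjoint_filter_filter h)]
  push_cast
  ring

lemma hdelta_eq_hdelta_inter_add_card_sdiff {E : Finset (Finset α)} {V : Finset α}
    (hE : ∀ e ∈ E, e ⊆ V) (S : Finset α) :
    hdelta E S = hdelta E (S ∩ V) + #(S \ V) := by
  have hfilter : E.filter (· ⊆ S) = E.filter (· ⊆ S ∩ V) :=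
    filter_congr fun e he => by simp [subset_inter_iff, hE e he]
  unfold hdelta
  rw [hfilter, ← card_inter_add_card_sdiff S V]
  push_cast
  ring

lemma hdelta_empty {E : Finset (Finset α)} (hE : ∀ e ∈ E, e.Nonempty) : hdelta E ∅ = 0 := by
  have : ∅ ∉ E := fun h => (hE ∅ h).ne_empty rfl
  simp [hdelta, this]

end Predimension

section Cycle

variable {m : ℕ} [NeZero m]

open Fin.NatCast in
lemma Fin.exists_and_not_add_one {p : Fin m → Prop} (h₁ : ∃ i, p i) (h₂ : ∃ i, ¬ p i) :
    ∃ i, p i ∧ ¬ p (i + 1) := by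
  by_contra! hclosed
  obtain ⟨i₀, hi₀⟩ := h₁
  have hshift : ∀ k : ℕ, p (i₀ + k) := by
    intro k
    induction k with
    | zero => simpa using hi₀
    | succ k ih => simpa [add_assoc] using hclosed _ ih
  obtain ⟨j, hj⟩ := h₂
  simpa [Fin.cast_val_eq_self] using hj (by simpa using hshift (j - i₀ : Fin m))

lemma Fin.card_filter_and_add_one_lt {p : Fin m → Prop} [DecidablePred p]
    (h₁ : ∃ i, p i) (h₂ : ∃ i, ¬ p i) :
    #{i | p i ∧ p (i + 1)} < #{i | p i} := by
  refine card_lt_card ((ssubset_iff_of_subset (monotone_filter_right _ fun _ _ => And.left)).mpr ?_)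
  obtain ⟨i, hi, hi'⟩ := Fin.exists_and_not_add_one h₁ h₂
  exact ⟨i, by simpa using hi, by simp [hi']⟩

lemma Fin.add_one_ne_self (hm : 1 < m) (i : Fin m) : i + 1 ≠ i := by
  rw [Ne, add_eq_left, Fin.ext_iff, Fin.val_one', Fin.val_zero, Nat.mod_eq_of_lt hm]
  omega

lemma Fin.add_one_add_one_ne_self (hm : 2 < m) (i : Fin m) : i + 1 + 1 ≠ i := by
  rw [add_assoc, Ne, add_eq_left, Fin.ext_iff, Fin.val_add, Fin.val_one', Fin.val_zero,
    Nat.mod_eq_of_lt (by omega : 1 < m), Nat.mod_eq_of_lt hm]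
  omega

variable {α : Type*} [DecidableEq α] (a b : Fin m → α)

def cycleEdge (i : Fin m) : Finset α := {a i, b i, b (i + 1)}

def cycleEdges : Finset (Finset α) := univ.image (cycleEdge a b)

variable {a b}

@[simp]
lemma cycleEdge_subset_iff {i : Fin m} {S : Finset α} :
    cycleEdge a b i ⊆ S ↔ a i ∈ S ∧ b i ∈ S ∧ b (i + 1) ∈ S := by
  simp [cycleEdge, insert_subset_iff]

lemma card_cycleEdge (hb : Injective b) (hab : ∀ i j, a i ≠ b j) (hm : 1 < m) (i : Fin m) :
    #(cycleEdge a b i) = 3 := by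
  have hne : b i ≠ b (i + 1) := hb.ne (Fin.add_one_ne_self hm i).symm
  simp [cycleEdge, card_insert_of_notMem, hab, hne]

-- For `m = 2` the hyperedges `{a 0, b 0, b 1}` and `{a 1, b 1, b 0}` coincide when `a 0 = a 1`.
lemma cycleEdge_injective (hb : Injective b) (hab : ∀ i j, a i ≠ b j)
    (h : 3 ≤ m ∨ Injective a) : Injective (cycleEdge a b) := by
  intro i j hij
  have mem : ∀ x, x ∈ cycleEdge a b i ↔ x ∈ cycleEdge a b j := fun x => by rw [hij]
  simp only [cycleEdge, mem_insert, mem_singleton] at mem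
  rcases h with hm | ha
  · have hba : ∀ i j, b i ≠ a j := fun i j => (hab j i).symm
    have hbi := (mem (b i)).mp (by simp)
    have hbj := (mem (b (i + 1))).mp (by simp)
    simp only [hba, hb.eq_iff, false_or] at hbi hbj
    rcases hbi with rfl | rfl
    · rfl
    · simp only [Fin.add_one_ne_self (by omega : 1 < m),
        Fin.add_one_add_one_ne_self (by omega : 2 < m), or_self] at hbj
  · have hai := (mem (a i)).mp (by simp)
    simpa [hab, ha.eq_iff] using hai

lemma card_filter_cycleEdges_le (S : Finset α) :
    #((cycleEdges a b).filter (· ⊆ S)) ≤ #{i | b i ∈ S ∧ b (i + 1) ∈ S} :=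
  calc #((cycleEdges a b).filter (· ⊆ S))
      ≤ #{i | cycleEdge a b i ⊆ S} := by
        rw [cycleEdges, filter_image]
        exact card_image_le
    _ ≤ #{i | b i ∈ S ∧ b (i + 1) ∈ S} :=
        card_le_card (monotone_filter_right _ fun _ _ h => (cycleEdge_subset_iff.mp h).2)

end Cycle

section CycleExtension

variable {α : Type*} [DecidableEq α] {m : ℕ} {VA : Finset α} {EA : Finset (Finset α)}
  {a b : Fin m → α}

lemma card_sdiff_eq_card_filter_mem {S : Finset α} (hb : Injective b) (hbVA : ∀ i, b i ∉ VA)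
    (hS : S ⊆ VA ∪ univ.image b) :
    #(S \ VA) = #{i | b i ∈ S} := by
  have : S \ VA = ({i | b i ∈ S} : Finset (Fin m)).image b := by
    ext x
    simp only [mem_sdiff, mem_image, mem_filter, mem_univ, true_and]
    constructor
    · rintro ⟨hxS, hxVA⟩
      obtain ⟨i, rfl⟩ : ∃ i, b i = x := by simpa [hxVA] using hS hxS
      exact ⟨i, hxS, rfl⟩
    · rintro ⟨i, hi, rfl⟩
      exact ⟨hi, hbVA i⟩
  rw [this, card_image_of_injective _ hb]

variable [NeZero m]

lemma hdelta_union_cycleEdges (hEA : ∀ e ∈ EA, e ⊆ VA) (hbVA : ∀ i, b i ∉ VA) (S : Finset α) :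
    hdelta (EA ∪ cycleEdges a b) S
      = hdelta EA (S ∩ VA) + #(S \ VA) - #((cycleEdges a b).filter (· ⊆ S)) := by
  have hdisj : Disjoint EA (cycleEdges a b) := by
    refine disjoint_left.mpr fun e he hc => ?_
    obtain ⟨i, -, rfl⟩ := mem_image.mp hc
    exact hbVA i (cycleEdge_subset_iff.mp (hEA _ he)).2.1
  rw [hdelta_union_of_disjoint hdisj, hdelta_eq_hdelta_inter_add_card_sdiff hEA]

lemma filter_cycleEdges_subset_eq_empty {S : Finset α} (h : ∀ i, a i ∉ S ∨ b i ∉ S) :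
    (cycleEdges a b).filter (· ⊆ S) = ∅ := by
  simp only [filter_eq_empty_iff, cycleEdges, mem_image, mem_univ, true_and]
  rintro _ ⟨i, rfl⟩ hi
  rcases h i with h | h <;> simp_all

lemma hdelta_union_cycleEdges_pos (hEA : ∀ e ∈ EA, e.card = 3 ∧ e ⊆ VA)
    (hK : ∀ S ⊆ VA, S.Nonempty → 0 < hdelta EA S) (ha : ∀ i, a i ∈ VA) (hb : Injective b)
    (hbVA : ∀ i, b i ∉ VA) {S : Finset α} (hS : S ⊆ VA ∪ univ.image b) (hne : S.Nonempty) :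
    0 < hdelta (EA ∪ cycleEdges a b) S := by
  rw [hdelta_union_cycleEdges (fun e he => (hEA e he).2) hbVA]
  by_cases hSA : (S ∩ VA).Nonempty
  · have hA := hK _ inter_subset_right hSA
    have hcnt := (card_filter_cycleEdges_le (a := a) (b := b) S).trans
      (card_le_card (monotone_filter_right _ fun _ _ => And.left))
    rw [card_sdiff_eq_card_filter_mem hb hbVA hS]
    omega
  · have hSA' : Disjoint S VA := disjoint_iff_inter_eq_empty.mpr (not_nonempty_iff_eq_empty.mp hSA)
    have hEA_ne : ∀ e ∈ EA, e.Nonempty := fun e he => card_pos.mp (by rw [(hEA e he).1]; norm_num)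
    rw [not_nonempty_iff_eq_empty.mp hSA, hdelta_empty hEA_ne,
      filter_cycleEdges_subset_eq_empty fun i => Or.inl (disjoint_right.mp hSA' (ha i)),
      sdiff_eq_self_of_disjoint hSA']
    simpa using hne

lemma hdelta_lt_hdelta_union_cycleEdges (hEA : ∀ e ∈ EA, e ⊆ VA) (hb : Injective b)
    (hbVA : ∀ i, b i ∉ VA) {D : Finset α} (hVAD : VA ⊂ D) (hDC : D ⊂ VA ∪ univ.image b) :
    hdelta EA VA < hdelta (EA ∪ cycleEdges a b) D := by
  rw [hdelta_union_cycleEdges hEA hbVA, inter_eq_right.mpr hVAD.subset,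
    card_sdiff_eq_card_filter_mem hb hbVA hDC.subset]
  have hin : ∃ i, b i ∈ D := by
    obtain ⟨x, hxD, hxVA⟩ := exists_of_ssubset hVAD
    obtain ⟨i, rfl⟩ : ∃ i, b i = x := by simpa [hxVA] using hDC.subset hxD
    exact ⟨i, hxD⟩
  have hout : ∃ i, b i ∉ D := by
    obtain ⟨x, hxC, hxD⟩ := exists_of_ssubset hDC
    have hxVA : x ∉ VA := fun h => hxD (hVAD.subset h)
    obtain ⟨i, rfl⟩ : ∃ i, b i = x := by simpa [hxVA] using hxC
    exact ⟨i, hxD⟩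
  have := (card_filter_cycleEdges_le (a := a) D).trans_lt (Fin.card_filter_and_add_one_lt hin hout)
  omega

lemma hdelta_union_cycleEdges_eq (hEA : ∀ e ∈ EA, e ⊆ VA) (ha : ∀ i, a i ∈ VA)
    (ha' : 3 ≤ m ∨ Injective a) (hb : Injective b) (hbVA : ∀ i, b i ∉ VA) :
    hdelta (EA ∪ cycleEdges a b) (VA ∪ univ.image b) = hdelta EA VA := by
  have hab : ∀ i j, a i ≠ b j := fun i j h => hbVA j (h ▸ ha i)
  have hall : (cycleEdges a b).filter (· ⊆ VA ∪ univ.image b) = cycleEdges a b :=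
    filter_true_of_mem (by simp [cycleEdges, ha])
  rw [hdelta_union_cycleEdges hEA hbVA, hall, cycleEdges,
    card_image_of_injective _ (cycleEdge_injective hb hab ha'), union_inter_cancel_left,
    card_sdiff_eq_card_filter_mem hb hbVA subset_rfl]
  simp

end CycleExtension

theorem exists_cycle_extension {α : Type*} [DecidableEq α] {VA : Finset α}
    {EA : Finset (Finset α)} (hEA : ∀ e ∈ EA, e.card = 3 ∧ e ⊆ VA)
    (hK : ∀ S ⊆ VA, S.Nonempty → 0 < hdelta EA S) {m : ℕ} (hm : 2 ≤ m) {a b : Fin m → α}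
    (ha : ∀ i, a i ∈ VA) (ha_surj : ∀ x ∈ VA, ∃ i, a i = x) (ha' : 3 ≤ m ∨ Injective a)
    (hb : Injective b) (hbVA : ∀ i, b i ∉ VA) :
    ∃ (VC : Finset α) (EC : Finset (Finset α)),
      VA ⊆ VC ∧ (∀ e ∈ EC, e.card = 3 ∧ e ⊆ VC) ∧
      EC.filter (fun e => e ⊆ VA) = EA ∧
      (VC \ VA).card = m ∧
      (∀ S ⊆ VC, S.Nonempty → 0 < hdelta EC S) ∧
      (∀ C : Finset α, VA ⊆ C → C ⊂ VC →
          ∀ D : Finset α, VA ⊂ D → D ⊆ C → hdelta EC VA < hdelta EC D) ∧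
      ¬ (∀ D : Finset α, VA ⊂ D → D ⊆ VC → hdelta EC VA < hdelta EC D) ∧
      hdelta EC VC = hdelta EC VA ∧
      (∀ x ∈ VA, ∃ e ∈ EC, x ∈ e ∧ ∃ v ∈ e, v ∈ VC \ VA) := by
  have : NeZero m := ⟨by omega⟩
  have hab : ∀ i j, a i ≠ b j := fun i j h => hbVA j (h ▸ ha i)
  have hEA' : ∀ e ∈ EA, e ⊆ VA := fun e he => (hEA e he).2
  have hnone : (cycleEdges a b).filter (· ⊆ VA) = ∅ :=
    filter_cycleEdges_subset_eq_empty fun i => Or.inr (hbVA i)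
  have hδVA : hdelta (EA ∪ cycleEdges a b) VA = hdelta EA VA := by
    rw [hdelta_union_cycleEdges hEA' hbVA, inter_self, sdiff_self, hnone]
    simp
  have hδVC := hdelta_union_cycleEdges_eq hEA' ha ha' hb hbVA
  have hVAC : VA ⊂ VA ∪ univ.image b :=
    (ssubset_iff_of_subset subset_union_left).mpr ⟨b 0, by simp, hbVA 0⟩
  refine ⟨VA ∪ univ.image b, EA ∪ cycleEdges a b, subset_union_left, ?_, ?_, ?_,
    fun S hS hne => hdelta_union_cycleEdges_pos hEA hK ha hb hbVA hS hne, ?_, ?_,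
    hδVC.trans hδVA.symm, ?_⟩
  · simp only [mem_union, cycleEdges, mem_image, mem_univ, true_and]
    rintro e (he | ⟨i, rfl⟩)
    · exact ⟨(hEA e he).1, (hEA e he).2.trans subset_union_left⟩
    · exact ⟨card_cycleEdge hb hab (by omega) i, by simp [ha]⟩
  · rw [filter_union, filter_true_of_mem hEA', hnone, union_empty]
  · rw [card_sdiff_eq_card_filter_mem hb hbVA subset_rfl]
    simp
  · intro C _ hC D hVAD hDC
    rw [hδVA]
    exact hdelta_lt_hdelta_union_cycleEdges hEA' hb hbVA hVAD (hDC.trans_ssubset hC)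
  · intro h
    have := h _ hVAC subset_rfl
    rw [hδVC, hδVA] at this
    exact lt_irrefl _ this
  · intro x hx
    obtain ⟨i, rfl⟩ := ha_surj x hx
    exact ⟨cycleEdge a b i, mem_union_right _ (mem_image_of_mem _ (mem_univ i)),
      by simp [cycleEdge], b i, by simp [cycleEdge], by simp [hbVA]⟩

lemma exists_injective_forall_notMem {α : Type*} [Infinite α] (s : Finset α) (m : ℕ) :
    ∃ b : Fin m → α, Injective b ∧ ∀ i, b i ∉ s := by
  have : Infinite ↥((s : Set α)ᶜ) := s.finite_toSet.infinite_compl.to_subtype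
  let f := Infinite.natEmbedding ↥((s : Set α)ᶜ)
  exact ⟨fun i => f i, fun i j h => Fin.val_injective (f.injective (Subtype.ext h)),
    fun i => (f i).2⟩

/-- For every `n ≥ 1` there is `m` (one may take `m = 3` for `n = 1` and `m = n` for
`n ≥ 2`) such that every finite 3-uniform hypergraph `A = (VA, EA)` in `K₀⁺` with `n`
vertices has an extension `C = (VC, EC)` in `K₀⁺` inducing `A` on `VA`, with
`|VC \ VA| = m`, such that `(VA, VC)` is a 0-minimal biminimal pair. -/
theorem stmt_8 :
    ∀ n : ℕ, 1 ≤ n → ∃ m : ℕ,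
      ((n = 1 → m = 3) ∧ (2 ≤ n → m = n)) ∧
      ∀ (VA : Finset ℕ) (EA : Finset (Finset ℕ)),
        (∀ e ∈ EA, e.card = 3 ∧ e ⊆ VA) → VA.card = n →
        (∀ S ⊆ VA, S.Nonempty → 0 < hdelta EA S) →
        ∃ (VC : Finset ℕ) (EC : Finset (Finset ℕ)),
          -- C is a 3-uniform hypergraph extending A and inducing A on VA
          VA ⊆ VC ∧ (∀ e ∈ EC, e.card = 3 ∧ e ⊆ VC) ∧
          EC.filter (fun e => e ⊆ VA) = EA ∧
          -- exactly m new vertices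
          (VC \ VA).card = m ∧
          -- C belongs to K₀⁺
          (∀ S ⊆ VC, S.Nonempty → 0 < hdelta EC S) ∧
          -- (VA, VC) is a minimal pair:
          (∀ C : Finset ℕ, VA ⊆ C → C ⊂ VC →
              ∀ D : Finset ℕ, VA ⊂ D → D ⊆ C → hdelta EC VA < hdelta EC D) ∧
          ¬ (∀ D : Finset ℕ, VA ⊂ D → D ⊆ VC → hdelta EC VA < hdelta EC D) ∧
          -- 0-minimal: δ(VC/VA) = 0
          hdelta EC VC = hdelta EC VA ∧
          -- biminimal: every vertex of VA lies in a hyperedge meeting VC \ VA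
          (∀ a ∈ VA, ∃ e ∈ EC, a ∈ e ∧ ∃ v ∈ e, v ∈ VC \ VA) := by
  intro n hn
  rcases hn.eq_or_lt with rfl | hn
  · refine ⟨3, ⟨fun _ => rfl, by omega⟩, fun VA EA hEA hcard hK => ?_⟩
    obtain ⟨x, rfl⟩ := card_eq_one.mp hcard
    obtain ⟨b, hb, hbVA⟩ := exists_injective_forall_notMem {x} 3
    exact exists_cycle_extension hEA hK (by norm_num) (a := fun _ => x) (by simp) (by simp)
      (Or.inl le_rfl) hb hbVA
  · refine ⟨n, ⟨by omega, fun _ => rfl⟩, fun VA EA hEA hcard hK => ?_⟩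
    let a := VA.orderIsoOfFin hcard
    obtain ⟨b, hb, hbVA⟩ := exists_injective_forall_notMem VA n
    exact exists_cycle_extension hEA hK hn (a := fun i => a i) (fun i => (a i).2)
      (fun y hy => ⟨a.symm ⟨y, hy⟩, by simp⟩) (Or.inr (Subtype.val_injective.comp a.injective))
      hb hbVA
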